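/- Let f : (0,∞) → ℝ be concave with sign(f(x)) = sign(x−1), t ↦ f(1/t) integrable over (0,1], and η ∈ (0,1). Then the equation ∑_{k=0}^∞ (1−η)^k f(1/(c(1−η)^k)) = 0 has a unique solution c ∈ (1,∞). -/

import Mathlib

/-!
Write `g u = f (1 / u)` and `q = 1 - η`, so that the series is
`S c = geomGridSum g q c = ∑ q ^ k g (c q ^ k)`.
A concave function that is bounded below near `+∞` is nondecreasing, and since `f 1 = 0 < f 2`
it is strictly increasing on `(0, 1]`; hence `g` is antitone on `(0, ∞)`, positive on `(0, 1)`,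
and strictly decreasing and nonpositive on `[1, ∞)`.
Because `g` is antitone, the partial sums of `(1 - q) c S c` are lower Riemann sums of `∫ g` on
the geometric grid `c q ^ k`, so they are at most `∫₀¹ g`. This gives summability, local uniform convergence (hence
continuity of `S`), and `S C < 0` for large `C` via `S C = g C + q S (C q)`. As `S > 0` on
`(0, 1]` and `S` is strictly decreasing on `[1, ∞)`, the intermediate value theorem gives exactly
one zero.
-/

open MeasureTheory Set Finset

theorem ConcaveOn.monotoneOn_Ioi {f : ℝ → ℝ} {a b : ℝ} (hf : ConcaveOn ℝ (Ioi a) f)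
    (hbdd : BddBelow (f '' Ioi b)) : MonotoneOn f (Ioi a) := by
  intro x hx y hy hxy
  rcases hxy.eq_or_lt with rfl | hxy
  · rfl
  by_contra! hdrop
  obtain ⟨m, hm⟩ := hbdd
  set s := (f y - f x) / (y - x)
  have hs : s < 0 := div_neg_of_neg_of_pos (by linarith) (by linarith)
  -- beyond `y` the graph stays below the chord through `x` and `y`, which drops below `m` at `z`
  set z := max y b + 1 + |m - f y| / -s with hz
  have hz_gt : max y b < z := by
    have : 0 ≤ |m - f y| / -s := div_nonneg (abs_nonneg _) (by linarith)
    linarith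
  have hyz : y < z := (le_max_left y b).trans_lt hz_gt
  have hslope : (f z - f y) / (z - y) ≤ s :=
    hf.slope_anti_adjacent hx (lt_trans (mem_Ioi.1 hy) hyz) hxy hyz
  have hchord : f z ≤ f y + s * (z - y) := by
    rw [div_le_iff₀ (by linarith)] at hslope
    linarith
  have hlin : s * (z - y) < m - f y := by
    have hzy : 1 + |m - f y| / -s ≤ z - y := by linarith [le_max_left y b]
    have hcancel : s * (1 + |m - f y| / -s) = s - |m - f y| := by
      field_simp [hs.ne]; ring
    linarith [mul_le_mul_of_nonpos_left hzy hs.le, neg_abs_le (m - f y)]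
  have := hm ⟨z, (le_max_right y b).trans_lt hz_gt, rfl⟩
  linarith

theorem AntitoneOn.sub_mul_le_integral {g : ℝ → ℝ} {a b : ℝ} (hg : AntitoneOn g (Icc a b))
    (hab : a ≤ b) : (b - a) * g b ≤ ∫ u in a..b, g u := by
  have hint : IntervalIntegrable g volume a b := (uIcc_of_le hab ▸ hg).intervalIntegrable
  simpa using intervalIntegral.integral_mono_on hab intervalIntegrable_const hint
    fun u hu ↦ hg hu (right_mem_Icc.2 hab) hu.2

noncomputable def geomGridSum (g : ℝ → ℝ) (q c : ℝ) : ℝ :=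
  ∑' k : ℕ, q ^ k * g (c * q ^ k)

section GeomGridSum

variable {g : ℝ → ℝ} {q c : ℝ}

theorem sum_geom_mul_le_integral (hg : AntitoneOn g (Ioi 0)) (hq0 : 0 < q) (hq1 : q ≤ 1)
    (hc : 0 < c) (N : ℕ) :
    (1 - q) * c * ∑ k ∈ range N, q ^ k * g (c * q ^ k) ≤ ∫ u in c * q ^ N..c, g u := by
  set a : ℕ → ℝ := fun k ↦ c * q ^ k
  have ha_pos (k : ℕ) : 0 < a k := by positivity
  have ha_succ (k : ℕ) : a (k + 1) ≤ a k := by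
    simpa only [a, pow_succ, ← mul_assoc] using mul_le_of_le_one_right (ha_pos k).le hq1
  have hint (k : ℕ) : IntervalIntegrable g volume (a k) (a (k + 1)) :=
    (hg.mono fun u hu ↦ (lt_min (ha_pos k) (ha_pos (k + 1))).trans_le hu.1).intervalIntegrable
  calc (1 - q) * c * ∑ k ∈ range N, q ^ k * g (c * q ^ k)
      = ∑ k ∈ range N, (a k - a (k + 1)) * g (a k) := by
        rw [Finset.mul_sum]; refine Finset.sum_congr rfl fun k _ ↦ ?_; simp only [a]; ring
    _ ≤ ∑ k ∈ range N, ∫ u in a (k + 1)..a k, g u := Finset.sum_le_sum fun k _ ↦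
        (hg.mono fun u hu ↦ (ha_pos (k + 1)).trans_le hu.1).sub_mul_le_integral (ha_succ k)
    _ = -∑ k ∈ range N, ∫ u in a k..a (k + 1), g u := by
        rw [← Finset.sum_neg_distrib]
        exact Finset.sum_congr rfl fun k _ ↦ intervalIntegral.integral_symm _ _
    _ = ∫ u in a N..a 0, g u := by
        rw [intervalIntegral.sum_integral_adjacent_intervals fun k _ ↦ hint k,
          intervalIntegral.integral_symm, neg_neg]
    _ = ∫ u in c * q ^ N..c, g u := by simp [a]

theorem AntitoneOn.nonneg_of_le_one (hg : AntitoneOn g (Ioi 0)) (hg1 : g 1 = 0) {u : ℝ}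
    (hu0 : 0 < u) (hu1 : u ≤ 1) : 0 ≤ g u :=
  hg1 ▸ hg hu0 (mem_Ioi.2 one_pos) hu1

theorem AntitoneOn.nonpos_of_one_le (hg : AntitoneOn g (Ioi 0)) (hg1 : g 1 = 0) {u : ℝ}
    (hu1 : 1 ≤ u) : g u ≤ 0 :=
  hg1 ▸ hg (mem_Ioi.2 one_pos) (one_pos.trans_le hu1) hu1

theorem integral_le_integral_zero_one (hg : AntitoneOn g (Ioi 0)) (hg1 : g 1 = 0)
    (hint : IntegrableOn g (Ioc 0 1)) {a b : ℝ} (ha : 0 < a) (hab : a ≤ b) :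
    ∫ u in a..b, g u ≤ ∫ u in (0 : ℝ)..1, g u := by
  have hint' {x y : ℝ} (hx : 0 < x) (hy : 0 < y) : IntervalIntegrable g volume x y :=
    (hg.mono fun u hu ↦ (lt_min hx hy).trans_le hu.1).intervalIntegrable
  have hle_zero_one {x y : ℝ} (hx : 0 ≤ x) (hxy : x ≤ y) (hy : y ≤ 1) :
      ∫ u in x..y, g u ≤ ∫ u in (0 : ℝ)..1, g u :=
    intervalIntegral.integral_mono_interval hx hxy hy
      ((ae_restrict_mem measurableSet_Ioc).mono fun u hu ↦ hg.nonneg_of_le_one hg1 hu.1 hu.2)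
      ((intervalIntegrable_iff_integrableOn_Ioc_of_le zero_le_one).2 hint)
  have hnonpos {x y : ℝ} (hx : 1 ≤ x) (hxy : x ≤ y) : ∫ u in x..y, g u ≤ 0 := by
    have hx0 : 0 < x := one_pos.trans_le hx
    simpa using intervalIntegral.integral_mono_on hxy (hint' hx0 (hx0.trans_le hxy))
      intervalIntegrable_const fun u hu ↦ hg.nonpos_of_one_le hg1 (hx.trans hu.1)
  rcases le_total b 1 with hb | hb
  · exact hle_zero_one ha.le hab hb
  rcases le_total a 1 with ha1 | ha1
  · rw [← intervalIntegral.integral_add_adjacent_intervals (hint' ha one_pos)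
      (hint' one_pos (ha.trans_le hab))]
    linarith [hle_zero_one ha.le ha1 le_rfl, hnonpos le_rfl hb]
  · exact (hnonpos ha1 hab).trans (by simpa using hle_zero_one zero_le_one le_rfl le_rfl)

theorem geom_mul_nonneg_of_le_one (hg : AntitoneOn g (Ioi 0)) (hg1 : g 1 = 0) (hq0 : 0 < q)
    (hq1 : q ≤ 1) (hc : 0 < c) (hc1 : c ≤ 1) (k : ℕ) : 0 ≤ q ^ k * g (c * q ^ k) :=
  mul_nonneg (pow_nonneg hq0.le k) <| hg.nonneg_of_le_one hg1 (by positivity)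
    ((mul_le_of_le_one_right hc.le (pow_le_one₀ hq0.le hq1)).trans hc1)

theorem sum_range_geom_mul_le (hg : AntitoneOn g (Ioi 0)) (hg1 : g 1 = 0)
    (hint : IntegrableOn g (Ioc 0 1)) (hq0 : 0 < q) (hq1 : q ≤ 1) (hc : 0 < c) (N : ℕ) :
    (1 - q) * c * ∑ k ∈ range N, q ^ k * g (c * q ^ k) ≤ ∫ u in (0 : ℝ)..1, g u :=
  (sum_geom_mul_le_integral hg hq0 hq1 hc N).trans <| integral_le_integral_zero_one hg hg1 hint
    (by positivity) (mul_le_of_le_one_right hc.le (pow_le_one₀ hq0.le hq1))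

theorem summable_geom_mul (hg : AntitoneOn g (Ioi 0)) (hg1 : g 1 = 0)
    (hint : IntegrableOn g (Ioc 0 1)) (hq0 : 0 < q) (hq1 : q < 1) (hc : 0 < c) :
    Summable fun k : ℕ ↦ q ^ k * g (c * q ^ k) := by
  have h_le_one {c : ℝ} (hc : 0 < c) (hc1 : c ≤ 1) :
      Summable fun k : ℕ ↦ q ^ k * g (c * q ^ k) := by
    refine summable_of_sum_range_le (c := (∫ u in (0 : ℝ)..1, g u) / ((1 - q) * c))
      (geom_mul_nonneg_of_le_one hg hg1 hq0 hq1.le hc hc1) fun N ↦ ?_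
    rw [le_div_iff₀' (mul_pos (sub_pos.2 hq1) hc)]
    exact sum_range_geom_mul_le hg hg1 hint hq0 hq1.le hc N
  -- finitely many steps bring `c` into `(0, 1]`
  obtain ⟨K, hK⟩ := exists_pow_lt_of_lt_one (inv_pos.2 hc) hq1
  have hcK : c * q ^ K ≤ 1 := by
    rw [← mul_inv_cancel₀ hc.ne']
    exact (mul_lt_mul_of_pos_left hK hc).le
  refine (summable_nat_add_iff K).1 ?_
  refine ((h_le_one (by positivity) hcK).mul_left (q ^ K)).congr fun k ↦ ?_
  simp only [pow_add, mul_comm (q ^ k) (q ^ K), mul_assoc]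

theorem mul_geomGridSum_le (hg : AntitoneOn g (Ioi 0)) (hg1 : g 1 = 0)
    (hint : IntegrableOn g (Ioc 0 1)) (hq0 : 0 < q) (hq1 : q < 1) (hc : 0 < c) :
    (1 - q) * c * geomGridSum g q c ≤ ∫ u in (0 : ℝ)..1, g u := by
  rw [geomGridSum, ← tsum_mul_left]
  refine ((summable_geom_mul hg hg1 hint hq0 hq1 hc).mul_left _).tsum_le_of_sum_range_le
    fun N ↦ ?_
  rw [← Finset.mul_sum]
  exact sum_range_geom_mul_le hg hg1 hint hq0 hq1.le hc N

theorem geomGridSum_eq_add (hs : Summable fun k : ℕ ↦ q ^ k * g (c * q ^ k)) :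
    geomGridSum g q c = g c + q * geomGridSum g q (c * q) := by
  rw [geomGridSum, hs.tsum_eq_zero_add, geomGridSum, ← tsum_mul_left]
  congr 1
  · simp
  · congr 1 with k
    ring_nf

theorem geomGridSum_pos (hg : AntitoneOn g (Ioi 0)) (hg1 : g 1 = 0)
    (hpos : ∀ u ∈ Set.Ioo 0 1, 0 < g u) (hint : IntegrableOn g (Ioc 0 1)) (hq0 : 0 < q)
    (hq1 : q < 1) (hc : 0 < c) (hc1 : c ≤ 1) : 0 < geomGridSum g q c := by
  refine (summable_geom_mul hg hg1 hint hq0 hq1 hc).tsum_pos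
    (geom_mul_nonneg_of_le_one hg hg1 hq0 hq1.le hc hc1) 1 ?_
  rw [pow_one]
  exact mul_pos hq0 (hpos _ ⟨by positivity, by nlinarith⟩)

theorem geomGridSum_strictAntiOn (hg : AntitoneOn g (Ioi 0)) (hg_strict : StrictAntiOn g (Ici 1))
    (hg1 : g 1 = 0) (hint : IntegrableOn g (Ioc 0 1)) (hq0 : 0 < q) (hq1 : q < 1) :
    StrictAntiOn (geomGridSum g q) (Ici 1) := by
  intro c hc c' hc' hcc'
  have hc0 : 0 < c := one_pos.trans_le hc
  have hc'0 : 0 < c' := hc0.trans hcc'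
  refine Summable.tsum_lt_tsum (i := 0) (fun k ↦ ?_) ?_
    (summable_geom_mul hg hg1 hint hq0 hq1 hc'0) (summable_geom_mul hg hg1 hint hq0 hq1 hc0)
  · exact mul_le_mul_of_nonneg_left (hg (mem_Ioi.2 (by positivity)) (mem_Ioi.2 (by positivity))
      (mul_le_mul_of_nonneg_right hcc'.le (by positivity))) (by positivity)
  · simpa using hg_strict hc hc' hcc'

theorem geomGridSum_continuousOn (hg : AntitoneOn g (Ioi 0)) (hg_cont : ContinuousOn g (Ioi 0))
    (hg1 : g 1 = 0) (hint : IntegrableOn g (Ioc 0 1)) (hq0 : 0 < q) (hq1 : q < 1) {a b : ℝ}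
    (ha : 0 < a) (hab : a ≤ b) : ContinuousOn (geomGridSum g q) (Icc a b) := by
  have hsum {c : ℝ} (hc : 0 < c) := summable_geom_mul hg hg1 hint hq0 hq1 hc
  refine continuousOn_tsum (fun k ↦ ?_) ((hsum (ha.trans_le hab)).abs.add (hsum ha).abs)
    fun k c hc ↦ ?_
  · exact continuousOn_const.mul <| hg_cont.comp (continuousOn_id.mul continuousOn_const)
      fun c hc ↦ mem_Ioi.2 (mul_pos (ha.trans_le hc.1) (pow_pos hq0 k))
  · have hc0 : 0 < c := ha.trans_le hc.1
    have hmono {x y : ℝ} (hx : 0 < x) (hxy : x ≤ y) :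
        q ^ k * g (y * q ^ k) ≤ q ^ k * g (x * q ^ k) :=
      mul_le_mul_of_nonneg_left (hg (mem_Ioi.2 (mul_pos hx (pow_pos hq0 k)))
        (mem_Ioi.2 (mul_pos (hx.trans_le hxy) (pow_pos hq0 k)))
        (mul_le_mul_of_nonneg_right hxy (by positivity))) (by positivity)
    rw [Real.norm_eq_abs]
    exact (abs_le_max_abs_abs (hmono hc0 hc.2) (hmono ha hc.1)).trans
      (max_le_add_of_nonneg (abs_nonneg _) (abs_nonneg _))

theorem exists_geomGridSum_neg (hg : AntitoneOn g (Ioi 0)) (hg_strict : StrictAntiOn g (Ici 1))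
    (hg1 : g 1 = 0) (hint : IntegrableOn g (Ioc 0 1)) (hq0 : 0 < q) (hq1 : q < 1) :
    ∃ C, 1 < C ∧ geomGridSum g q C < 0 := by
  have hI : 0 ≤ ∫ u in (0 : ℝ)..1, g u := by
    simpa using integral_le_integral_zero_one hg hg1 hint one_pos le_rfl
  have hg2 : g 2 < 0 := hg1 ▸ hg_strict (mem_Ici.2 le_rfl) (mem_Ici.2 one_le_two) one_lt_two
  have hslope : 0 < (1 - q) * -g 2 := mul_pos (sub_pos.2 hq1) (neg_pos.2 hg2)
  -- `C` makes `(1 - q) * C * g 2` fall below `-∫₀¹ g`, which outweighs the bound `∫₀¹ g` on the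
  -- tail `(1 - q) * C * q * geomGridSum g q (C * q)`
  obtain ⟨C, hC⟩ : ∃ C : ℝ, (1 - q) * -g 2 * (C - 2) = ∫ u in (0 : ℝ)..1, g u :=
    ⟨2 + (∫ u in (0 : ℝ)..1, g u) / ((1 - q) * -g 2), by
      rw [add_sub_cancel_left, mul_div_cancel₀ _ hslope.ne']⟩
  have hC2 : 2 ≤ C := sub_nonneg.1 <| (mul_nonneg_iff_of_pos_left hslope).1 (hC ▸ hI)
  have hC0 : 0 < C := by linarith
  have hqC : 0 < (1 - q) * C := mul_pos (sub_pos.2 hq1) hC0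
  refine ⟨C, by linarith, ?_⟩
  have htail := mul_geomGridSum_le hg hg1 hint hq0 hq1 (mul_pos hC0 hq0)
  have hgC : (1 - q) * C * g C ≤ (1 - q) * C * g 2 :=
    mul_le_mul_of_nonneg_left (hg (by norm_num) hC0 hC2) hqC.le
  have hneg : (1 - q) * C * geomGridSum g q C < 0 := by
    rw [geomGridSum_eq_add (summable_geom_mul hg hg1 hint hq0 hq1 hC0)]
    linarith
  exact neg_of_mul_neg_right hneg hqC.le

theorem exists_unique_zero_geomGridSum (hg : AntitoneOn g (Ioi 0))
    (hg_strict : StrictAntiOn g (Ici 1)) (hg_cont : ContinuousOn g (Ioi 0)) (hg1 : g 1 = 0)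
    (hpos : ∀ u ∈ Set.Ioo 0 1, 0 < g u) (hint : IntegrableOn g (Ioc 0 1)) (hq0 : 0 < q)
    (hq1 : q < 1) :
    ∃ c, 1 < c ∧ geomGridSum g q c = 0 ∧ ∀ c', 0 < c' → geomGridSum g q c' = 0 → c' = c := by
  have hne_of_le_one {c : ℝ} (hc : 0 < c) (hc1 : c ≤ 1) : geomGridSum g q c ≠ 0 :=
    (geomGridSum_pos hg hg1 hpos hint hq0 hq1 hc hc1).ne'
  obtain ⟨C, hC1, hC⟩ := exists_geomGridSum_neg hg hg_strict hg1 hint hq0 hq1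
  obtain ⟨c, hc, hc0⟩ := intermediate_value_Icc' hC1.le
    (geomGridSum_continuousOn hg hg_cont hg1 hint hq0 hq1 one_pos hC1.le)
    ⟨hC.le, (geomGridSum_pos hg hg1 hpos hint hq0 hq1 one_pos le_rfl).le⟩
  have hc1 : 1 < c := hc.1.lt_of_ne fun h ↦ hne_of_le_one one_pos le_rfl (h ▸ hc0)
  refine ⟨c, hc1, hc0, fun c' hc' hc'0 ↦ ?_⟩
  rcases le_or_gt c' 1 with h | h
  · exact absurd hc'0 (hne_of_le_one hc' h)
  · exact (geomGridSum_strictAntiOn hg hg_strict hg1 hint hq0 hq1).injOn (mem_Ici.2 h.le)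
      (mem_Ici.2 hc1.le) (hc'0.trans hc0.symm)

end GeomGridSum

theorem stmt_11_general (f : ℝ → ℝ) (hconc : ConcaveOn ℝ (Set.Ioi 0) f)
    (hone : f 1 = 0)
    (hposf : ∀ x : ℝ, 1 < x → 0 < f x)
    (hint : IntegrableOn (fun t => f (1 / t)) (Set.Ioc 0 1))
    (η : ℝ) (hη0 : 0 < η) (hη1 : η < 1) :
    ∃ c : ℝ, 1 < c ∧ (∑' k : ℕ, (1 - η) ^ k * f (1 / (c * (1 - η) ^ k))) = 0 ∧
      ∀ c' : ℝ, 0 < c' →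
        (∑' k : ℕ, (1 - η) ^ k * f (1 / (c' * (1 - η) ^ k))) = 0 → c' = c := by
  have hmono : MonotoneOn f (Ioi 0) :=
    hconc.monotoneOn_Ioi ⟨0, by rintro _ ⟨x, hx, rfl⟩; exact (hposf x hx).le⟩
  have hstrict : StrictMonoOn f (Ioc 0 1) := by
    simpa [Ioi_inter_Iic] using
      hconc.strictMonoOn (mem_Ioi.2 two_pos) one_lt_two (hone ▸ hposf 2 one_lt_two)
  have hg_anti : AntitoneOn (fun u ↦ f (1 / u)) (Ioi 0) := fun x hx y hy hxy ↦
    hmono (mem_Ioi.2 (one_div_pos.2 hy)) (mem_Ioi.2 (one_div_pos.2 hx))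
      (one_div_le_one_div_of_le hx hxy)
  have hg_strict : StrictAntiOn (fun u ↦ f (1 / u)) (Ici 1) := fun x hx y hy hxy ↦ by
    have hx0 : 0 < x := one_pos.trans_le hx
    have hy0 : 0 < y := hx0.trans hxy
    exact hstrict ⟨one_div_pos.2 hy0, (div_le_one₀ hy0).2 hy⟩
      ⟨one_div_pos.2 hx0, (div_le_one₀ hx0).2 hx⟩ (one_div_lt_one_div_of_lt hx0 hxy)
  have hg_cont : ContinuousOn (fun u ↦ f (1 / u)) (Ioi 0) :=
    (hconc.continuousOn isOpen_Ioi).comp (continuousOn_const.div continuousOn_id fun u hu ↦ hu.ne')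
      fun u hu ↦ mem_Ioi.2 (one_div_pos.2 hu)
  exact exists_unique_zero_geomGridSum hg_anti hg_strict hg_cont (by simpa using hone)
    (fun u hu ↦ hposf _ (one_lt_one_div hu.1 hu.2)) hint (by linarith) (by linarith)

/-- For `η ∈ (0,1)`, the equation `∑_{k=0}^∞ (1-η)^k f(1/(c(1-η)^k)) = 0`
has a unique positive solution `c`, and it lies in `(1,∞)`. -/
theorem stmt_11 (f : ℝ → ℝ) (hconc : ConcaveOn ℝ (Set.Ioi 0) f)
    (hneg : ∀ x : ℝ, 0 < x → x < 1 → f x < 0)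
    (hone : f 1 = 0)
    (hposf : ∀ x : ℝ, 1 < x → 0 < f x)
    (hint : IntegrableOn (fun t => f (1 / t)) (Set.Ioc 0 1))
    (η : ℝ) (hη0 : 0 < η) (hη1 : η < 1) :
    ∃ c : ℝ, 1 < c ∧ (∑' k : ℕ, (1 - η) ^ k * f (1 / (c * (1 - η) ^ k))) = 0 ∧
      ∀ c' : ℝ, 0 < c' →
        (∑' k : ℕ, (1 - η) ^ k * f (1 / (c' * (1 - η) ^ k))) = 0 → c' = c :=
  stmt_11_general f hconc hone hposf hint η hη0 hη1
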